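/- arXiv:2212.06293 — 7 statements merged into one kernel-verified Lean document; each statement's English description precedes it below -/
import Mathlib

section
/- Let E be a real vector space and K ⊆ E a relatively solid cone (icor K ≠ ∅). For any linear functional y' ∈ K⁺ and any k ∈ icor K with y'(k) = 0, one has y'(x) = 0 for all x ∈ K. Consequently K⁺ \ ℓ(K⁺) = {y' ∈ K⁺ \ {0} | ∃ k ∈ icor K : y'(k) > 0}. -/
open Pointwise

theorem neg_mem_span_sub_self {R E : Type*} [Ring R] [AddCommGroup E] [Module R E] {K : Set E}
    (hK0 : (0 : E) ∈ K) {x : E} (hx : x ∈ K) : -x ∈ Submodule.span R (K - K) :=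
  Submodule.subset_span ⟨0, hK0, x, hx, zero_sub x⟩

section IntrinsicCore

variable {𝕜 E : Type*} [Field 𝕜] [LinearOrder 𝕜] [AddCommGroup E] [Module 𝕜 E]

variable (𝕜) in
def intrinsicCore (K : Set E) : Set E :=
  {x ∈ K | ∀ v ∈ Submodule.span 𝕜 (K - K), ∃ ε > (0 : 𝕜), ∀ t ∈ Set.Icc (0 : 𝕜) ε, x + t • v ∈ K}

variable [IsStrictOrderedRing 𝕜]

/-- From `k` one can move a little in the direction `-x`, which forces `y' x ≤ 0`. -/
theorem apply_eq_zero_of_apply_intrinsicCore_eq_zero {K : Set E} (hK0 : (0 : E) ∈ K)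
    {y' : E →ₗ[𝕜] 𝕜} (hy : ∀ k ∈ K, 0 ≤ y' k) {k : E} (hk : k ∈ intrinsicCore 𝕜 K)
    (hyk : y' k = 0) {x : E} (hx : x ∈ K) : y' x = 0 := by
  obtain ⟨ε, hε, hmove⟩ := hk.2 (-x) (neg_mem_span_sub_self hK0 hx)
  have hstep : 0 ≤ y' (k + ε • -x) := hy _ (hmove ε ⟨hε.le, le_rfl⟩)
  rw [map_add, map_smul, map_neg, hyk, smul_eq_mul, zero_add, mul_neg, neg_nonneg] at hstep
  exact le_antisymm (nonpos_of_mul_nonpos_right hstep hε) (hy x hx)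

theorem apply_intrinsicCore_pos {K : Set E} (hK0 : (0 : E) ∈ K)
    {y' : E →ₗ[𝕜] 𝕜} (hy : ∀ k ∈ K, 0 ≤ y' k) {x : E} (hx : x ∈ K) (hyx : 0 < y' x)
    {k : E} (hk : k ∈ intrinsicCore 𝕜 K) : 0 < y' k :=
  (hy k hk.1).lt_of_ne fun hyk =>
    hyx.ne' (apply_eq_zero_of_apply_intrinsicCore_eq_zero hK0 hy hk hyk.symm hx)

end IntrinsicCore

theorem stmt_3_general {E : Type*} [AddCommGroup E] [Module ℝ E] (K : Set E)
    (hK0 : (0 : E) ∈ K)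
    (icorK : Set E)
    (hicor : icorK = {x ∈ K | ∀ v ∈ Submodule.span ℝ (K - K), ∃ ε > (0 : ℝ),
      ∀ t ∈ Set.Icc (0 : ℝ) ε, x + t • v ∈ K})
    (hrelsolid : icorK.Nonempty) :
    (∀ y' : E →ₗ[ℝ] ℝ, (∀ k ∈ K, 0 ≤ y' k) →
      ∀ k ∈ icorK, y' k = 0 → ∀ x ∈ K, y' x = 0) ∧
    ({y' : E →ₗ[ℝ] ℝ | (∀ k ∈ K, 0 ≤ y' k) ∧ ¬ (∀ k ∈ K, 0 ≤ (-y') k)}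
      = {y' : E →ₗ[ℝ] ℝ | (∀ k ∈ K, 0 ≤ y' k) ∧ y' ≠ 0 ∧
          ∃ k ∈ icorK, 0 < y' k}) := by
  change icorK = intrinsicCore ℝ K at hicor
  subst hicor
  refine ⟨fun y' hy k hk hyk x hx =>
    apply_eq_zero_of_apply_intrinsicCore_eq_zero hK0 hy hk hyk hx, ?_⟩
  ext y'
  simp only [Set.mem_ofPred_eq, LinearMap.neg_apply, neg_nonneg, not_forall, not_le]
  constructor
  · rintro ⟨hy, x, hx, hyx⟩
    have hyx : 0 < y' x := (hy x hx).lt_of_ne' hyx.ne'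
    obtain ⟨k, hk⟩ := hrelsolid
    exact ⟨hy, fun h => by simp [h] at hyx, k, hk, apply_intrinsicCore_pos hK0 hy hx hyx hk⟩
  · rintro ⟨hy, -, k, hk, hyk⟩
    exact ⟨hy, k, hk.1, hyk⟩

/-- For a relatively solid cone K: if y' ∈ K⁺ vanishes at some point of
icor K, then y' vanishes on K; consequently
K⁺ \ ℓ(K⁺) = {y' ∈ K⁺ \ {0} | ∃ k ∈ icor K, y'(k) > 0}. -/
theorem stmt_3 {E : Type*} [AddCommGroup E] [Module ℝ E] (K : Set E)
    (hK0 : (0 : E) ∈ K) (hKcone : ∀ t : ℝ, 0 ≤ t → ∀ x ∈ K, t • x ∈ K)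
    (icorK : Set E)
    (hicor : icorK = {x ∈ K | ∀ v ∈ Submodule.span ℝ (K - K), ∃ ε > (0 : ℝ),
      ∀ t ∈ Set.Icc (0 : ℝ) ε, x + t • v ∈ K})
    (hrelsolid : icorK.Nonempty) :
    (∀ y' : E →ₗ[ℝ] ℝ, (∀ k ∈ K, 0 ≤ y' k) →
      ∀ k ∈ icorK, y' k = 0 → ∀ x ∈ K, y' x = 0) ∧
    ({y' : E →ₗ[ℝ] ℝ | (∀ k ∈ K, 0 ≤ y' k) ∧ ¬ (∀ k ∈ K, 0 ≤ (-y') k)}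
      = {y' : E →ₗ[ℝ] ℝ | (∀ k ∈ K, 0 ≤ y' k) ∧ y' ≠ 0 ∧
          ∃ k ∈ icorK, 0 < y' k}) :=
  stmt_3_general K hK0 icorK hicor hrelsolid
end

section
/- Let K ⊆ E be a cone generated by a nonempty set B (i.e., K = ℝ₊·B) with K ≠ E. Then cor K = ℙ · ((cor K) ∩ B), where ℙ denotes the positive reals and cor denotes the algebraic interior. -/
/-!
A point `t • b` of the cone over `B` lies in its algebraic interior iff `b` does, as long as
`t > 0`: scaling by a positive factor maps the cone onto itself and the directions `v` onto all
directions. The factor `t = 0` is excluded because `0` is never in the algebraic interior of a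
proper cone: a segment `[0, ε v]` inside the cone puts every direction `v` into it.
-/

open Set

section AlgebraicInterior

variable {E : Type*} [AddCommGroup E] [Module ℝ E]

/-- The cone `ℝ₊ · B` generated by `B`. -/
def rayHull (B : Set E) : Set E :=
  {x : E | ∃ t : ℝ, 0 ≤ t ∧ ∃ b ∈ B, x = t • b}

/-- The algebraic interior `cor K`. -/
def algCore (K : Set E) : Set E :=
  {x ∈ K | ∀ v : E, ∃ ε > (0 : ℝ), ∀ t ∈ Icc (0 : ℝ) ε, x + t • v ∈ K}

theorem smul_mem_rayHull {B : Set E} {s : ℝ} (hs : 0 ≤ s) {y : E} (hy : y ∈ rayHull B) :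
    s • y ∈ rayHull B := by
  obtain ⟨t, ht, b, hb, rfl⟩ := hy
  exact ⟨s * t, mul_nonneg hs ht, b, hb, (mul_smul s t b).symm⟩

theorem smul_mem_algCore {K : Set E} (hK : ∀ s : ℝ, 0 ≤ s → ∀ y ∈ K, s • y ∈ K)
    {s : ℝ} (hs : 0 < s) {x : E} (hx : x ∈ algCore K) :
    s • x ∈ algCore K := by
  refine ⟨hK s hs.le x hx.1, fun v => ?_⟩
  obtain ⟨ε, hε, hseg⟩ := hx.2 (s⁻¹ • v)
  refine ⟨ε, hε, fun t ht => ?_⟩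
  have hscaled : s • (x + t • s⁻¹ • v) = s • x + t • v := by
    rw [smul_add, smul_smul, smul_smul, mul_comm s t, mul_inv_cancel_right₀ hs.ne']
  simpa only [hscaled] using hK s hs.le _ (hseg t ht)

theorem eq_univ_of_zero_mem_algCore {K : Set E} (hK : ∀ s : ℝ, 0 ≤ s → ∀ y ∈ K, s • y ∈ K)
    (h0 : (0 : E) ∈ algCore K) : K = univ := by
  refine eq_univ_of_forall fun v => ?_
  obtain ⟨ε, hε, hseg⟩ := h0.2 v
  have hεv : ε • v ∈ K := by simpa only [zero_add] using hseg ε ⟨hε.le, le_rfl⟩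
  simpa only [smul_smul, inv_mul_cancel₀ hε.ne', one_smul] using hK ε⁻¹ (by positivity) _ hεv

theorem smul_mem_algCore_iff {K : Set E} (hK : ∀ s : ℝ, 0 ≤ s → ∀ y ∈ K, s • y ∈ K)
    (hKne : K ≠ univ) {s : ℝ} (hs : 0 ≤ s) {x : E} :
    s • x ∈ algCore K ↔ 0 < s ∧ x ∈ algCore K := by
  refine ⟨fun hsx => ?_, fun ⟨hs', hx⟩ => smul_mem_algCore hK hs' hx⟩
  obtain hs0 | hs' := hs.eq_or_lt
  · rw [← hs0, zero_smul] at hsx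
    exact absurd (eq_univ_of_zero_mem_algCore hK hsx) hKne
  · refine ⟨hs', ?_⟩
    simpa only [smul_smul, inv_mul_cancel₀ hs'.ne', one_smul] using
      smul_mem_algCore hK (inv_pos.2 hs') hsx

theorem algCore_rayHull {B : Set E} (hne : rayHull B ≠ univ) :
    algCore (rayHull B) = {x : E | ∃ t : ℝ, 0 < t ∧ ∃ b ∈ algCore (rayHull B) ∩ B, x = t • b} := by
  have hcone : ∀ s : ℝ, 0 ≤ s → ∀ y ∈ rayHull B, s • y ∈ rayHull B :=
    fun _ hs _ hy => smul_mem_rayHull hs hy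
  ext x
  constructor
  · intro hx
    obtain ⟨t, ht, b, hb, rfl⟩ := hx.1
    obtain ⟨ht', hbcore⟩ := (smul_mem_algCore_iff hcone hne ht).1 hx
    exact ⟨t, ht', b, ⟨hbcore, hb⟩, rfl⟩
  · rintro ⟨t, ht, b, ⟨hbcore, -⟩, rfl⟩
    exact smul_mem_algCore hcone ht hbcore

end AlgebraicInterior

theorem stmt_4_general {E : Type*} [AddCommGroup E] [Module ℝ E] (B K : Set E)
    (hK : K = {x : E | ∃ t : ℝ, 0 ≤ t ∧ ∃ b ∈ B, x = t • b})
    (hKne : K ≠ Set.univ)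
    (corK : Set E)
    (hcor : corK = {x ∈ K | ∀ v : E, ∃ ε > (0 : ℝ),
      ∀ t ∈ Set.Icc (0 : ℝ) ε, x + t • v ∈ K}) :
    corK = {x : E | ∃ t : ℝ, 0 < t ∧ ∃ b ∈ corK ∩ B, x = t • b} := by
  subst hcor hK
  exact algCore_rayHull hKne

/-- If K = ℝ₊·B with K ≠ E, then cor K = ℙ·((cor K) ∩ B). -/
theorem stmt_4 {E : Type*} [AddCommGroup E] [Module ℝ E] (B K : Set E)
    (hB : B.Nonempty)
    (hK : K = {x : E | ∃ t : ℝ, 0 ≤ t ∧ ∃ b ∈ B, x = t • b})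
    (hKne : K ≠ Set.univ)
    (corK : Set E)
    (hcor : corK = {x ∈ K | ∀ v : E, ∃ ε > (0 : ℝ),
      ∀ t ∈ Set.Icc (0 : ℝ) ε, x + t • v ∈ K}) :
    corK = {x : E | ∃ t : ℝ, 0 < t ∧ ∃ b ∈ corK ∩ B, x = t • b} :=
  stmt_4_general B K hK hKne corK hcor
end

section
/- Let E be a real separated locally convex topological vector space, K ⊆ E a nontrivial cone admitting a compact base B_K (i.e., B_K ⊆ K \ {0} is nonempty compact and every x ∈ K \ {0} has a unique representation x = λb with λ > 0, b ∈ B_K). Then the algebraic interior of the topological dual cone K⁺_τ := {x* ∈ E* | x*(k) ≥ 0 ∀ k ∈ K} equals K^#_τ := {x* ∈ E* | x*(k) > 0 ∀ k ∈ K \ {0}}. -/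
/-! A functional in the algebraic interior of `K⁺` is strictly positive on `K \ {0}`: perturbing it
by a continuous functional equal to `-1` at `k ≠ 0` (one exists since the dual separates points)
keeps it nonnegative at `k`. Conversely, if `x*` is strictly positive on `K \ {0}`, then the
continuous function `x* / (|y*| + 1)` has a positive minimum `ε` on the compact base, so
`x* + t y* ≥ 0` on the base, hence on all of `K`, for `0 ≤ t ≤ ε`. -/

open Set

lemma IsCompact.exists_pos_forall_nonneg_add_mul {X : Type*} [TopologicalSpace X] {S : Set X}
    (hS : IsCompact S) {f g : X → ℝ} (hf : Continuous f) (hg : Continuous g)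
    (hpos : ∀ x ∈ S, 0 < f x) : ∃ ε > 0, ∀ t ∈ Icc 0 ε, ∀ x ∈ S, 0 ≤ f x + t * g x := by
  have hratio : ∀ x ∈ S, 0 < f x / (|g x| + 1) := fun x hx => by
    have := hpos x hx
    positivity
  obtain ⟨ε, hε, hεle⟩ := hS.exists_forall_le'
    ((hf.div (by fun_prop) fun x => by positivity).continuousOn) hratio
  refine ⟨ε, hε, fun t ⟨ht0, htε⟩ x hx => ?_⟩
  have hεx : ε * (|g x| + 1) ≤ f x := (le_div_iff₀ (by positivity)).mp (hεle x hx)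
  have htg : t * |g x| ≤ ε * |g x| := mul_le_mul_of_nonneg_right htε (abs_nonneg _)
  have hlow : t * -|g x| ≤ t * g x := mul_le_mul_of_nonneg_left (neg_abs_le (g x)) ht0
  linarith

lemma nonneg_on_of_nonneg_on_base {E F : Type*} [AddCommGroup E] [Module ℝ E] [FunLike F E ℝ]
    [LinearMapClass F ℝ E ℝ] {K B : Set E}
    (hbase : ∀ x ∈ K, x ≠ 0 → ∃ p : ℝ × E, 0 < p.1 ∧ p.2 ∈ B ∧ x = p.1 • p.2)
    {φ : F} (hφ : ∀ b ∈ B, 0 ≤ φ b) : ∀ x ∈ K, 0 ≤ φ x := by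
  intro x hx
  rcases eq_or_ne x 0 with rfl | hx0
  · simp
  obtain ⟨⟨c, b⟩, hc, hb, rfl⟩ := hbase x hx hx0
  simpa only [map_smul, smul_eq_mul] using mul_nonneg hc.le (hφ b hb)

lemma ContinuousLinearMap.pos_of_forall_exists_nonneg_add_smul {E : Type*} [AddCommGroup E]
    [Module ℝ E] [TopologicalSpace E] [SeparatingDual ℝ E] {φ : E →L[ℝ] ℝ} {x : E} (hx : x ≠ 0)
    (h : ∀ ψ : E →L[ℝ] ℝ, ∃ ε > (0 : ℝ), 0 ≤ (φ + ε • ψ) x) : 0 < φ x := by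
  obtain ⟨ψ, hψ⟩ := SeparatingDual.exists_eq_one (R := ℝ) hx
  obtain ⟨ε, hε, hnonneg⟩ := h (-ψ)
  simp only [add_apply, smul_apply, neg_apply, hψ, smul_eq_mul] at hnonneg
  linarith

theorem stmt_6_general {E : Type*} [AddCommGroup E] [Module ℝ E] [TopologicalSpace E]
    [IsTopologicalAddGroup E] [ContinuousSMul ℝ E] [LocallyConvexSpace ℝ E]
    [T2Space E]
    (K : Set E)
    (BK : Set E) (hBKsub : BK ⊆ K \ {0})
    (hBKcompact : IsCompact BK)
    (hbase : ∀ x ∈ K, x ≠ 0 →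
      ∃! p : ℝ × E, 0 < p.1 ∧ p.2 ∈ BK ∧ x = p.1 • p.2) :
    {xs : E →L[ℝ] ℝ | (∀ k ∈ K, 0 ≤ xs k) ∧
        ∀ ys : E →L[ℝ] ℝ, ∃ ε > (0 : ℝ), ∀ t ∈ Set.Icc (0 : ℝ) ε,
          ∀ k ∈ K, 0 ≤ (xs + t • ys) k}
      = {xs : E →L[ℝ] ℝ | ∀ k ∈ K, k ≠ 0 → 0 < xs k} := by
  have hbase' := fun x hx hx0 => (hbase x hx hx0).exists
  ext xs
  constructor
  · rintro ⟨-, hcor⟩ k hk hk0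
    refine xs.pos_of_forall_exists_nonneg_add_smul hk0 fun ys => ?_
    obtain ⟨ε, hε, hεK⟩ := hcor ys
    exact ⟨ε, hε, hεK ε ⟨hε.le, le_rfl⟩ k hk⟩
  · intro hpos
    have hposB : ∀ b ∈ BK, 0 < xs b := fun b hb => hpos b (hBKsub hb).1 (hBKsub hb).2
    refine ⟨nonneg_on_of_nonneg_on_base hbase' fun b hb => (hposB b hb).le, fun ys => ?_⟩
    obtain ⟨ε, hε, hεB⟩ :=
      hBKcompact.exists_pos_forall_nonneg_add_mul xs.continuous ys.continuous hposB
    exact ⟨ε, hε, fun t ht => nonneg_on_of_nonneg_on_base hbase' (hεB t ht)⟩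

/-- In a real Hausdorff locally convex space, for a nontrivial cone with a
compact base, the algebraic interior of the topological dual cone equals
K^#_τ = {xs | xs(k) > 0 ∀ k ∈ K \ {0}}. -/
theorem stmt_6 {E : Type*} [AddCommGroup E] [Module ℝ E] [TopologicalSpace E]
    [IsTopologicalAddGroup E] [ContinuousSMul ℝ E] [LocallyConvexSpace ℝ E]
    [T2Space E]
    (K : Set E) (hK0 : (0 : E) ∈ K)
    (hKcone : ∀ t : ℝ, 0 ≤ t → ∀ x ∈ K, t • x ∈ K)
    (hKne : K ≠ {0}) (hKneE : K ≠ Set.univ)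
    (BK : Set E) (hBKsub : BK ⊆ K \ {0}) (hBKne : BK.Nonempty)
    (hBKcompact : IsCompact BK)
    (hbase : ∀ x ∈ K, x ≠ 0 →
      ∃! p : ℝ × E, 0 < p.1 ∧ p.2 ∈ BK ∧ x = p.1 • p.2) :
    {xs : E →L[ℝ] ℝ | (∀ k ∈ K, 0 ≤ xs k) ∧
        ∀ ys : E →L[ℝ] ℝ, ∃ ε > (0 : ℝ), ∀ t ∈ Set.Icc (0 : ℝ) ε,
          ∀ k ∈ K, 0 ≤ (xs + t • ys) k}
      = {xs : E →L[ℝ] ℝ | ∀ k ∈ K, k ≠ 0 → 0 < xs k} :=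
  stmt_6_general K BK hBKsub hBKcompact hbase
end

section
/- Let E be a real vector space, ψ a seminorm, and K a nontrivial cone with K^{a+} := {(x', α) ∈ K⁺ × ℝ₊ | x'(y) − αψ(y) ≥ 0 ∀ y ∈ K}. Then ℓ(K^{a+}) = ℓ(K⁺) × {0}; in particular K^{a+} is pointed if and only if K⁺ is pointed. -/
/-!
If `(x', α)` and `-(x', α)` both lie in `K^{a+}`, then `α ≥ 0` and `-α ≥ 0`, so `α = 0`; and at
`α = 0` the defining inequality `x'(y) - α ψ(y) ≥ 0` of `K^{a+}` is just `x' ∈ K⁺`. Hence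
`ℓ(K^{a+}) = ℓ(K⁺) × {0}`, which is `{0}` exactly when `ℓ(K⁺)` is.
-/

open Set

theorem Set.prod_singleton_zero_eq_zero_iff {α β : Type*} [Zero α] [Zero β] {s : Set α} :
    s ×ˢ ({0} : Set β) = {0} ↔ s = {0} := by
  rw [← Prod.mk_zero_zero, ← singleton_prod_singleton, prod_eq_prod_iff]
  simp

section AugmentedDual

variable {𝕜 E : Type*} [CommRing 𝕜] [PartialOrder 𝕜]
  [AddCommGroup E] [Module 𝕜 E]

def dualCone (K : Set E) : Set (E →ₗ[𝕜] 𝕜) :=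
  {x' | ∀ k ∈ K, 0 ≤ x' k}

def augmentedDualCone (ψ : E → 𝕜) (K : Set E) : Set ((E →ₗ[𝕜] 𝕜) × 𝕜) :=
  {p | p.1 ∈ dualCone K ∧ 0 ≤ p.2 ∧ ∀ y ∈ K, 0 ≤ p.1 y - p.2 * ψ y}

variable {ψ : E → 𝕜} {K : Set E}

theorem mk_zero_mem_augmentedDualCone_iff {x' : E →ₗ[𝕜] 𝕜} :
    (x', 0) ∈ augmentedDualCone ψ K ↔ x' ∈ dualCone K := by
  simp [augmentedDualCone, dualCone]

theorem snd_eq_zero_of_mem_augmentedDualCone_inter_neg [IsOrderedRing 𝕜] {p : (E →ₗ[𝕜] 𝕜) × 𝕜}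
    (hp : p ∈ augmentedDualCone ψ K ∩ -augmentedDualCone ψ K) : p.2 = 0 :=
  le_antisymm (neg_nonneg.mp hp.2.2.1) hp.1.2.1

theorem augmentedDualCone_inter_neg [IsOrderedRing 𝕜] (ψ : E → 𝕜) (K : Set E) :
    augmentedDualCone ψ K ∩ -augmentedDualCone ψ K = (dualCone K ∩ -dualCone K) ×ˢ {0} := by
  ext ⟨x', α⟩
  constructor
  · intro hp
    obtain rfl : α = 0 := snd_eq_zero_of_mem_augmentedDualCone_inter_neg hp
    obtain ⟨hpos, hneg⟩ := hp
    rw [mem_neg, Prod.neg_mk, neg_zero] at hneg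
    exact ⟨⟨mk_zero_mem_augmentedDualCone_iff.mp hpos,
      mk_zero_mem_augmentedDualCone_iff.mp hneg⟩, rfl⟩
  · rintro ⟨⟨hpos, hneg⟩, rfl : α = 0⟩
    refine ⟨mk_zero_mem_augmentedDualCone_iff.mpr hpos, ?_⟩
    rw [mem_neg, Prod.neg_mk, neg_zero]
    exact mk_zero_mem_augmentedDualCone_iff.mpr hneg

end AugmentedDual

theorem stmt_9_general {E : Type*} [AddCommGroup E] [Module ℝ E] (ψ : E → ℝ)
    (K : Set E)
    (Ka : Set ((E →ₗ[ℝ] ℝ) × ℝ))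
    (hKa : Ka = {p : (E →ₗ[ℝ] ℝ) × ℝ | (∀ k ∈ K, 0 ≤ p.1 k) ∧ 0 ≤ p.2 ∧
      ∀ y ∈ K, 0 ≤ p.1 y - p.2 * ψ y}) :
    (Ka ∩ (-Ka) = {p : (E →ₗ[ℝ] ℝ) × ℝ |
        ((∀ k ∈ K, 0 ≤ p.1 k) ∧ (∀ k ∈ K, 0 ≤ (-p.1) k)) ∧ p.2 = 0}) ∧
    ((Ka ∩ (-Ka) = {0}) ↔
      ({x' : E →ₗ[ℝ] ℝ | ∀ k ∈ K, 0 ≤ x' k} ∩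
        (-{x' : E →ₗ[ℝ] ℝ | ∀ k ∈ K, 0 ≤ x' k}) = {0})) := by
  have hlin : Ka ∩ -Ka = (dualCone K ∩ -dualCone K) ×ˢ {0} :=
    hKa ▸ augmentedDualCone_inter_neg ψ K
  exact ⟨hlin, hlin ▸ prod_singleton_zero_eq_zero_iff⟩

/-- ℓ(K^{a+}) = ℓ(K⁺) × {0}; hence K^{a+} is pointed iff K⁺ is pointed. -/
theorem stmt_9 {E : Type*} [AddCommGroup E] [Module ℝ E] (ψ : E → ℝ)
    (hψ_add : ∀ x y : E, ψ (x + y) ≤ ψ x + ψ y)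
    (hψ_smul : ∀ t : ℝ, 0 ≤ t → ∀ x : E, ψ (t • x) = t * ψ x)
    (hψ_symm : ∀ x : E, ψ (-x) = ψ x)
    (K : Set E) (hK0 : (0 : E) ∈ K)
    (hKcone : ∀ t : ℝ, 0 ≤ t → ∀ x ∈ K, t • x ∈ K)
    (hKne : K ≠ {0}) (hKneE : K ≠ Set.univ)
    (Ka : Set ((E →ₗ[ℝ] ℝ) × ℝ))
    (hKa : Ka = {p : (E →ₗ[ℝ] ℝ) × ℝ | (∀ k ∈ K, 0 ≤ p.1 k) ∧ 0 ≤ p.2 ∧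
      ∀ y ∈ K, 0 ≤ p.1 y - p.2 * ψ y}) :
    (Ka ∩ (-Ka) = {p : (E →ₗ[ℝ] ℝ) × ℝ |
        ((∀ k ∈ K, 0 ≤ p.1 k) ∧ (∀ k ∈ K, 0 ≤ (-p.1) k)) ∧ p.2 = 0}) ∧
    ((Ka ∩ (-Ka) = {0}) ↔
      ({x' : E →ₗ[ℝ] ℝ | ∀ k ∈ K, 0 ≤ x' k} ∩
        (-{x' : E →ₗ[ℝ] ℝ | ∀ k ∈ K, 0 ≤ x' k}) = {0})) :=
  stmt_9_general ψ K Ka hKa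
end

section
/- Let E be a real topological vector space, ψ a seminorm on E, K a nontrivial cone with normlike-base B_K = {x ∈ K | ψ(x) = 1} (where ψ > 0 on K \ {0}). If there exists (x*, α) ∈ K^{a+}_τ with x* continuous and α > 0, then 0 ∉ cl(conv(B_K)). -/
theorem closure_convexHull_subset_setOf_le {E : Type*} [AddCommGroup E] [Module ℝ E]
    [TopologicalSpace E] (f : E →L[ℝ] ℝ) {s : Set E} {a : ℝ} (h : ∀ x ∈ s, a ≤ f x) :
    closure (convexHull ℝ s) ⊆ {x | a ≤ f x} :=
  closure_minimal (convexHull_min h (convex_halfSpace_ge f.toLinearMap.isLinear a))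
    (isClosed_le continuous_const f.continuous)

theorem stmt_12_general {E : Type*} [AddCommGroup E] [Module ℝ E] [TopologicalSpace E]
    (ψ : E → ℝ)
    (K : Set E)
    (BK : Set E) (hBK : BK = {x ∈ K | ψ x = 1})
    (xs : E →L[ℝ] ℝ) (α : ℝ) (hα : 0 < α)
    (hmem : (∀ k ∈ K, 0 ≤ xs k) ∧ ∀ y ∈ K, 0 ≤ xs y - α * ψ y) :
    (0 : E) ∉ closure (convexHull ℝ BK) := by
  have hBK_ge : ∀ b ∈ BK, α ≤ xs b := by
    rintro b hb
    rw [hBK] at hb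
    simpa [hb.2] using hmem.2 b hb.1
  intro h0
  have hα_le : α ≤ xs 0 := closure_convexHull_subset_setOf_le xs hBK_ge h0
  rw [map_zero] at hα_le
  linarith

/-- If (xs, α) ∈ K^{a+}_τ with α > 0, then 0 ∉ cl(conv(B_K)). -/
theorem stmt_12 {E : Type*} [AddCommGroup E] [Module ℝ E] [TopologicalSpace E]
    [IsTopologicalAddGroup E] [ContinuousSMul ℝ E] (ψ : E → ℝ)
    (hψ_add : ∀ x y : E, ψ (x + y) ≤ ψ x + ψ y)
    (hψ_smul : ∀ t : ℝ, 0 ≤ t → ∀ x : E, ψ (t • x) = t * ψ x)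
    (hψ_symm : ∀ x : E, ψ (-x) = ψ x)
    (K : Set E) (hK0 : (0 : E) ∈ K)
    (hKcone : ∀ t : ℝ, 0 ≤ t → ∀ x ∈ K, t • x ∈ K)
    (hKne : K ≠ {0}) (hKneE : K ≠ Set.univ)
    (hψpos : ∀ x ∈ K, x ≠ 0 → 0 < ψ x)
    (BK : Set E) (hBK : BK = {x ∈ K | ψ x = 1})
    (hgen : K = {x : E | ∃ t : ℝ, 0 ≤ t ∧ ∃ b ∈ BK, x = t • b})
    (xs : E →L[ℝ] ℝ) (α : ℝ) (hα : 0 < α)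
    (hmem : (∀ k ∈ K, 0 ≤ xs k) ∧ ∀ y ∈ K, 0 ≤ xs y - α * ψ y) :
    (0 : E) ∉ closure (convexHull ℝ BK) :=
  stmt_12_general ψ K BK hBK xs α hα hmem
end

section
/- (Strict cone separation) Let E be a real locally convex space, ψ a seminorm, K, A nontrivial cones with normlike-bases B_K, B_A, K pointed. Set S_{−K} := conv(−B_K), S_A^0 := conv(B_A ∪ {0}) and suppose one of cl(S_{−K}), cl(S_A^0) is compact. If cl(S_A^0) ∩ cl(S_{−K}) = ∅, then there exist x* ∈ E* and α > 0 with x*(k) > αψ(k) > 0 for all k ∈ K \ {0}, such that x*(a) + αψ(a) > 0 for all a ∈ A \ {0} and x*(k) + αψ(k) < 0 for all k ∈ −K \ {0}. In particular A ∩ (−K \ {0}) = ∅. -/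
/-!
Separate the convex sets `conv(-B_K)` and `conv(B_A ∪ {0})` strictly by a continuous functional
`f`, with `f < u` on the first and `f > v > u` on the second. Since `0` lies in the second set,
`α := -v` is positive, and `f > α` on `B_K`, `f > -α` on `B_A`. The functions `f - α ψ` and
`f + α ψ` are positively homogeneous, so these strict inequalities on the bases propagate to the
nonzero points of the cones they generate; the statement on `-K` is the one on `K` read at `-k`,
using `ψ (-k) = ψ k`.
-/

section Cone

variable {E : Type*} [AddCommGroup E] [Module ℝ E]

theorem pos_of_mem_cone_of_pos_on_base {g : E → ℝ}
    (hg : ∀ t : ℝ, 0 ≤ t → ∀ x, g (t • x) = t * g x) {B : Set E} (hB : ∀ b ∈ B, 0 < g b)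
    {x : E} (hx : ∃ t : ℝ, 0 ≤ t ∧ ∃ b ∈ B, x = t • b) (hx0 : x ≠ 0) : 0 < g x := by
  obtain ⟨t, ht, b, hb, rfl⟩ := hx
  have ht0 : t ≠ 0 := by
    rintro rfl
    exact hx0 (zero_smul ℝ b)
  rw [hg t ht]
  exact mul_pos (lt_of_le_of_ne ht (Ne.symm ht0)) (hB b hb)

theorem linear_add_mul_smul {ψ : E → ℝ} (hψ_smul : ∀ t : ℝ, 0 ≤ t → ∀ x : E, ψ (t • x) = t * ψ x)
    (f : E →ₗ[ℝ] ℝ) (c t : ℝ) (ht : 0 ≤ t) (x : E) :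
    f (t • x) + c * ψ (t • x) = t * (f x + c * ψ x) := by
  rw [map_smul, smul_eq_mul, hψ_smul t ht]
  ring

end Cone

section Separation

variable {E : Type*} [AddCommGroup E] [Module ℝ E] [TopologicalSpace E]
  [IsTopologicalAddGroup E] [ContinuousSMul ℝ E] [LocallyConvexSpace ℝ E]

theorem exists_strict_separation_of_disjoint_closure {S T : Set E} (hS : Convex ℝ S)
    (hT : Convex ℝ T) (hcompact : IsCompact (closure S) ∨ IsCompact (closure T))
    (hdisj : Disjoint (closure S) (closure T)) :
    ∃ (f : E →L[ℝ] ℝ) (u v : ℝ), (∀ x ∈ S, f x < u) ∧ u < v ∧ ∀ x ∈ T, v < f x := by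
  obtain ⟨f, u, v, hfS, huv, hfT⟩ :
      ∃ (f : E →L[ℝ] ℝ) (u v : ℝ),
        (∀ x ∈ closure S, f x < u) ∧ u < v ∧ ∀ x ∈ closure T, v < f x := by
    rcases hcompact with hc | hc
    · exact geometric_hahn_banach_compact_closed hS.closure hc hT.closure isClosed_closure hdisj
    · exact geometric_hahn_banach_closed_compact hS.closure isClosed_closure hT.closure hc hdisj
  exact ⟨f, u, v, fun x hx => hfS x (subset_closure hx), huv,
    fun x hx => hfT x (subset_closure hx)⟩

theorem exists_functional_gt_on_bases {BK BA : Set E}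
    (hcompact : IsCompact (closure (convexHull ℝ (-BK))) ∨
      IsCompact (closure (convexHull ℝ (BA ∪ {0}))))
    (hdisj : Disjoint (closure (convexHull ℝ (-BK))) (closure (convexHull ℝ (BA ∪ {0})))) :
    ∃ (f : E →L[ℝ] ℝ) (α : ℝ), 0 < α ∧ (∀ b ∈ BK, α < f b) ∧ ∀ b ∈ BA, -α < f b := by
  obtain ⟨f, u, v, hfK, huv, hfA⟩ := exists_strict_separation_of_disjoint_closure
    (convex_convexHull ℝ _) (convex_convexHull ℝ _) hcompact hdisj
  have hv : v < 0 := by simpa using hfA 0 (subset_convexHull ℝ _ (Or.inr rfl))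
  refine ⟨f, -v, neg_pos.2 hv, fun b hb => ?_, fun b hb => ?_⟩
  · have := hfK (-b) (subset_convexHull ℝ _ (Set.neg_mem_neg.2 hb))
    rw [map_neg] at this
    linarith
  · simpa using hfA b (subset_convexHull ℝ _ (Or.inl hb))

end Separation

theorem stmt_18_general {E : Type*} [AddCommGroup E] [Module ℝ E] [TopologicalSpace E]
    [IsTopologicalAddGroup E] [ContinuousSMul ℝ E] [LocallyConvexSpace ℝ E]
    (ψ : E → ℝ)
    (hψ_smul : ∀ t : ℝ, 0 ≤ t → ∀ x : E, ψ (t • x) = t * ψ x)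
    (hψ_symm : ∀ x : E, ψ (-x) = ψ x)
    (K A : Set E)
    (hψposK : ∀ x ∈ K, x ≠ 0 → 0 < ψ x)
    (BK BA : Set E)
    (hBK : BK = {x ∈ K | ψ x = 1}) (hBA : BA = {x ∈ A | ψ x = 1})
    (hgenK : K = {x : E | ∃ t : ℝ, 0 ≤ t ∧ ∃ b ∈ BK, x = t • b})
    (hgenA : A = {x : E | ∃ t : ℝ, 0 ≤ t ∧ ∃ b ∈ BA, x = t • b})
    (SmK SA0 : Set E)
    (hSmK : SmK = convexHull ℝ (-BK))
    (hSA0 : SA0 = convexHull ℝ (BA ∪ {0}))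
    (hcompact : IsCompact (closure SmK) ∨ IsCompact (closure SA0))
    (hdisj : closure SA0 ∩ closure SmK = ∅) :
    (∃ xs : E →L[ℝ] ℝ, ∃ α : ℝ, 0 < α ∧
      (∀ k ∈ K, k ≠ 0 → α * ψ k < xs k ∧ 0 < α * ψ k) ∧
      (∀ a ∈ A, a ≠ 0 → 0 < xs a + α * ψ a) ∧
      (∀ k : E, -k ∈ K → k ≠ 0 → xs k + α * ψ k < 0)) ∧
    A ∩ {x : E | -x ∈ K ∧ x ≠ 0} = ∅ := by
  subst hSmK hSA0
  obtain ⟨f, α, hα, hfK, hfA⟩ := exists_functional_gt_on_bases hcompact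
    (Set.disjoint_iff_inter_eq_empty.2 (by rwa [Set.inter_comm]))
  have hK : ∀ k ∈ K, k ≠ 0 → α * ψ k < f k := fun k hk hk0 => by
    simpa only [neg_mul, ← sub_eq_add_neg, sub_pos] using
      pos_of_mem_cone_of_pos_on_base (g := fun x => f x + -α * ψ x)
        (linear_add_mul_smul hψ_smul f.toLinearMap (-α))
        (fun b (hb : b ∈ BK) => by simpa [(hBK ▸ hb).2, ← sub_eq_add_neg] using hfK b hb)
        (by rwa [hgenK] at hk) hk0
  have hA : ∀ a ∈ A, a ≠ 0 → 0 < f a + α * ψ a := fun a ha ha0 =>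
    pos_of_mem_cone_of_pos_on_base (g := fun x => f x + α * ψ x)
      (linear_add_mul_smul hψ_smul f.toLinearMap α)
      (fun b (hb : b ∈ BA) => by simpa [(hBA ▸ hb).2, neg_lt_iff_pos_add] using hfA b hb)
      (by rwa [hgenA] at ha) ha0
  have hnegK : ∀ k : E, -k ∈ K → k ≠ 0 → f k + α * ψ k < 0 := fun k hk hk0 => by
    have := hK (-k) hk (neg_ne_zero.2 hk0)
    rw [hψ_symm, map_neg] at this
    linarith
  refine ⟨⟨f, α, hα, fun k hk hk0 => ⟨hK k hk hk0, mul_pos hα (hψposK k hk hk0)⟩, hA, hnegK⟩, ?_⟩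
  refine Set.eq_empty_of_forall_notMem fun a ⟨ha, hak, ha0⟩ => ?_
  exact (hA a ha ha0).not_gt (hnegK a hak ha0)

/-- Strict cone separation theorem in a real locally convex space. -/
theorem stmt_18 {E : Type*} [AddCommGroup E] [Module ℝ E] [TopologicalSpace E]
    [IsTopologicalAddGroup E] [ContinuousSMul ℝ E] [LocallyConvexSpace ℝ E]
    [T2Space E] (ψ : E → ℝ)
    (hψ_add : ∀ x y : E, ψ (x + y) ≤ ψ x + ψ y)
    (hψ_smul : ∀ t : ℝ, 0 ≤ t → ∀ x : E, ψ (t • x) = t * ψ x)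
    (hψ_symm : ∀ x : E, ψ (-x) = ψ x)
    (K A : Set E)
    (hKne : K ≠ {0}) (hKneE : K ≠ Set.univ)
    (hAne : A ≠ {0}) (hAneE : A ≠ Set.univ)
    (hKpointed : K ∩ (-K) = {0})
    (hψposK : ∀ x ∈ K, x ≠ 0 → 0 < ψ x)
    (hψposA : ∀ x ∈ A, x ≠ 0 → 0 < ψ x)
    (BK BA : Set E)
    (hBK : BK = {x ∈ K | ψ x = 1}) (hBA : BA = {x ∈ A | ψ x = 1})
    (hgenK : K = {x : E | ∃ t : ℝ, 0 ≤ t ∧ ∃ b ∈ BK, x = t • b})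
    (hgenA : A = {x : E | ∃ t : ℝ, 0 ≤ t ∧ ∃ b ∈ BA, x = t • b})
    (SmK SA0 : Set E)
    (hSmK : SmK = convexHull ℝ (-BK))
    (hSA0 : SA0 = convexHull ℝ (BA ∪ {0}))
    (hcompact : IsCompact (closure SmK) ∨ IsCompact (closure SA0))
    (hdisj : closure SA0 ∩ closure SmK = ∅) :
    (∃ xs : E →L[ℝ] ℝ, ∃ α : ℝ, 0 < α ∧
      (∀ k ∈ K, k ≠ 0 → α * ψ k < xs k ∧ 0 < α * ψ k) ∧
      (∀ a ∈ A, a ≠ 0 → 0 < xs a + α * ψ a) ∧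
      (∀ k : E, -k ∈ K → k ≠ 0 → xs k + α * ψ k < 0)) ∧
    A ∩ {x : E | -x ∈ K ∧ x ≠ 0} = ∅ :=
  stmt_18_general ψ hψ_smul hψ_symm K A hψposK BK BA hBK hBA hgenK hgenA SmK SA0 hSmK hSA0 hcompact
    hdisj
end

section
/- (Converse strict separation) Let E be a real topological vector space, ψ a seminorm, K, A nontrivial cones with normlike-bases B_K, B_A, K pointed, and B_K compact. If there exist a continuous linear functional x* and α ≥ 0 such that x*(a) + αψ(a) ≥ 0 for all a ∈ A and x*(k) + αψ(k) < 0 for all k ∈ −K \ {0}, then cl(conv(B_A ∪ {0})) ∩ cl(conv(−B_K)) = ∅. -/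
/-!
By compactness `x*` attains its minimum on `B_K` at some `b₀`. Since `-b₀ ∈ -K \ {0}` and
`ψ (-b₀) = 1`, the separation gives `x*(-b₀) < -α`, so `x* ≤ x*(-b₀) < -α` on `-B_K`, while
`x* ≥ -α` on `B_A ∪ {0}`. Both bounds pass to closed convex hulls, which are therefore disjoint.
-/

section ClosedConvexHull

variable {E : Type*} [AddCommGroup E] [Module ℝ E] [TopologicalSpace E]

theorem ContinuousLinearMap.le_of_mem_closure_convexHull (f : E →L[ℝ] ℝ) {s : Set E} {c : ℝ}
    (hs : ∀ y ∈ s, f y ≤ c) {x : E} (hx : x ∈ closure (convexHull ℝ s)) : f x ≤ c :=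
  closure_minimal (convexHull_min hs (convex_halfSpace_le f.toLinearMap.isLinear c))
    (isClosed_le f.continuous continuous_const) hx

theorem closure_convexHull_inter_eq_empty_of_separated (f : E →L[ℝ] ℝ) {s t : Set E} {c d : ℝ}
    (hdc : d < c) (hs : ∀ y ∈ s, c ≤ f y) (ht : ∀ y ∈ t, f y ≤ d) :
    closure (convexHull ℝ s) ∩ closure (convexHull ℝ t) = ∅ := by
  refine Set.eq_empty_of_forall_notMem fun x ⟨hxs, hxt⟩ => ?_
  have hc : -f x ≤ -c := (-f).le_of_mem_closure_convexHull (fun y hy => by simpa using hs y hy) hxs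
  have hd : f x ≤ d := f.le_of_mem_closure_convexHull ht hxt
  linarith

end ClosedConvexHull

theorem stmt_19_general {E : Type*} [AddCommGroup E] [Module ℝ E] [TopologicalSpace E]
    (ψ : E → ℝ)
    (hψ_smul : ∀ t : ℝ, 0 ≤ t → ∀ x : E, ψ (t • x) = t * ψ x)
    (hψ_symm : ∀ x : E, ψ (-x) = ψ x)
    (K A : Set E)
    (BK BA : Set E)
    (hBK : BK = {x ∈ K | ψ x = 1}) (hBA : BA = {x ∈ A | ψ x = 1})
    (hBKcompact : IsCompact BK)
    (xs : E →L[ℝ] ℝ) (α : ℝ) (hα : 0 ≤ α)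
    (hsepA : ∀ a ∈ A, 0 ≤ xs a + α * ψ a)
    (hsepK : ∀ k : E, -k ∈ K → k ≠ 0 → xs k + α * ψ k < 0) :
    closure (convexHull ℝ (BA ∪ {0})) ∩ closure (convexHull ℝ (-BK)) = ∅ := by
  subst hBK hBA
  rcases Set.eq_empty_or_nonempty {x ∈ K | ψ x = 1} with hempty | hne
  · simp [hempty]
  obtain ⟨b₀, ⟨hb₀K, hb₀ψ⟩, hb₀min⟩ :=
    hBKcompact.exists_isMinOn hne xs.continuous.continuousOn
  have hψ_zero : ψ 0 = 0 := by simpa using hψ_smul 0 le_rfl 0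
  have hb₀ne : -b₀ ≠ 0 := by
    intro h
    rw [neg_eq_zero.mp h, hψ_zero] at hb₀ψ
    exact zero_ne_one hb₀ψ
  have hlt : xs (-b₀) < -α := by
    have := hsepK (-b₀) (by rwa [neg_neg]) hb₀ne
    rw [hψ_symm, hb₀ψ] at this
    linarith
  refine closure_convexHull_inter_eq_empty_of_separated xs hlt ?_ ?_
  · rintro y (⟨hyA, hyψ⟩ | rfl)
    · have := hsepA y hyA
      rw [hyψ, mul_one] at this
      linarith
    · simpa using hα
  · intro y hy
    have := hb₀min hy
    simp only [Set.mem_ofPred_eq, map_neg] at this ⊢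
    linarith

/-- Converse strict separation theorem: a strict nonlinear separation of A
and −K (with compact base B_K) forces the closed convex hulls
cl(conv(B_A ∪ {0})) and cl(conv(−B_K)) to be disjoint. -/
theorem stmt_19 {E : Type*} [AddCommGroup E] [Module ℝ E] [TopologicalSpace E]
    [IsTopologicalAddGroup E] [ContinuousSMul ℝ E] (ψ : E → ℝ)
    (hψ_add : ∀ x y : E, ψ (x + y) ≤ ψ x + ψ y)
    (hψ_smul : ∀ t : ℝ, 0 ≤ t → ∀ x : E, ψ (t • x) = t * ψ x)
    (hψ_symm : ∀ x : E, ψ (-x) = ψ x)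
    (K A : Set E)
    (hKne : K ≠ {0}) (hKneE : K ≠ Set.univ)
    (hAne : A ≠ {0}) (hAneE : A ≠ Set.univ)
    (hKpointed : K ∩ (-K) = {0})
    (hψposK : ∀ x ∈ K, x ≠ 0 → 0 < ψ x)
    (hψposA : ∀ x ∈ A, x ≠ 0 → 0 < ψ x)
    (BK BA : Set E)
    (hBK : BK = {x ∈ K | ψ x = 1}) (hBA : BA = {x ∈ A | ψ x = 1})
    (hgenK : K = {x : E | ∃ t : ℝ, 0 ≤ t ∧ ∃ b ∈ BK, x = t • b})
    (hgenA : A = {x : E | ∃ t : ℝ, 0 ≤ t ∧ ∃ b ∈ BA, x = t • b})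
    (hBKcompact : IsCompact BK)
    (xs : E →L[ℝ] ℝ) (α : ℝ) (hα : 0 ≤ α)
    (hsepA : ∀ a ∈ A, 0 ≤ xs a + α * ψ a)
    (hsepK : ∀ k : E, -k ∈ K → k ≠ 0 → xs k + α * ψ k < 0) :
    closure (convexHull ℝ (BA ∪ {0})) ∩ closure (convexHull ℝ (-BK)) = ∅ :=
  stmt_19_general ψ hψ_smul hψ_symm K A BK BA hBK hBA hBKcompact xs α hα hsepA hsepK
end
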